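/- Let G be a graph, and let C₁, C₂, C₃ be connected induced subgraphs of G with pairwise distance at least two in G. Let k be the minimum of lmw(C₁), lmw(C₂), lmw(C₃). If for each pair of subgraphs Cᵢ, Cⱼ (with third subgraph C_l) there exists a path P_{i,j} in G running from Cᵢ to Cⱼ that does not intersect the closed neighborhood N[C_l] of the third subgraph, then lmw(G) ≥ k+1. -/

import Mathlib

open scoped Classical

noncomputable section

namespace LMW

variable {V : Type*} [Fintype V]

/-- The bipartite graph `G[Vᵢ, V̄ᵢ]` consisting of the edges of `G` crossing the cut at
position `i` of the linear layout `σ` (here `Vᵢ` is the set of the first `i` vertices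
in the layout). -/
def cutGraph (G : SimpleGraph V) (σ : V ≃ Fin (Fintype.card V)) (i : ℕ) : SimpleGraph V where
  Adj u v := G.Adj u v ∧
    (((σ u : ℕ) < i ∧ i ≤ (σ v : ℕ)) ∨ ((σ v : ℕ) < i ∧ i ≤ (σ u : ℕ)))
  symm := by
    constructor
    intro u v h
    exact ⟨h.1.symm, h.2.symm⟩
  loopless := by
    constructor
    intro u h
    exact G.irrefl h.1

/-- `M` is an induced matching in `H`: a set of edges of `H` such that any two distinct
edges of `M` share no endpoint and no endpoint of one is adjacent in `H` to an endpoint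
of the other. -/
def IsInducedMatching (H : SimpleGraph V) (M : Finset (Sym2 V)) : Prop :=
  (↑M : Set (Sym2 V)) ⊆ H.edgeSet ∧
    ∀ e ∈ M, ∀ f ∈ M, e ≠ f → ∀ u ∈ e, ∀ v ∈ f, u ≠ v ∧ ¬ H.Adj u v

/-- `mim H` is the size of a maximum induced matching of `H`. -/
def mim (H : SimpleGraph V) : ℕ :=
  sSup {n : ℕ | ∃ M : Finset (Sym2 V), IsInducedMatching H M ∧ M.card = n}

/-- The MIM-width of `G` under the linear layout `σ`: the maximum over all cuts
`1 ≤ i < |V|` of the size of a maximum induced matching of the cut graph. -/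
def mw (G : SimpleGraph V) (σ : V ≃ Fin (Fintype.card V)) : ℕ :=
  (Finset.Ico 1 (Fintype.card V)).sup fun i => mim (cutGraph G σ i)

/-- The linear MIM-width of `G`: the minimum of `mw G σ` over all linear layouts `σ`. -/
def lmw (G : SimpleGraph V) : ℕ :=
  sInf {m : ℕ | ∃ σ : V ≃ Fin (Fintype.card V), mw G σ = m}

/-- The closed neighborhood `N[s]` of a set of vertices: `s` together with all vertices
adjacent to some vertex of `s`. -/
def closedNbhd (G : SimpleGraph V) (s : Set V) : Set V :=
  s ∪ {v | ∃ u ∈ s, G.Adj u v}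

end LMW

/-!
Fix a layout `σ` of `G`. The layout that `σ` induces on each `Cᵢ` has a cut whose induced matching
has at least `k` edges; read in `G`, it is an induced matching of the corresponding cut of `σ`
with all endpoints in `Cᵢ`. Let `Cⱼ` be the part whose cut is the median of the three. Since
`k ≥ 1`, each of the other two parts straddles its own cut, so one of them has a vertex before the
median cut and the other a vertex after it. These two vertices are joined by a walk avoiding
`N[Cⱼ]` (inside the two connected parts, which lie outside `N[Cⱼ]`, and along the given path),
and an edge of that walk crossing the median cut extends the matching to `k + 1` edges.
For `k = 0`, any edge crossing a cut gives a matching of size one.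
-/

namespace LMW

section InducedMatching

variable {V : Type*} {H : SimpleGraph V} {M : Finset (Sym2 V)}

lemma mim_bddAbove [Fintype V] (H : SimpleGraph V) :
    BddAbove {n : ℕ | ∃ M : Finset (Sym2 V), IsInducedMatching H M ∧ M.card = n} :=
  ⟨Fintype.card (Sym2 V), by rintro n ⟨M, -, rfl⟩; exact M.card_le_univ⟩

lemma IsInducedMatching.card_le_mim [Fintype V] (hM : IsInducedMatching H M) : M.card ≤ mim H :=
  le_csSup (mim_bddAbove H) ⟨M, hM, rfl⟩

lemma isInducedMatching_empty (H : SimpleGraph V) : IsInducedMatching H ∅ := by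
  refine ⟨?_, ?_⟩ <;> simp

lemma exists_isInducedMatching_card_eq_mim [Fintype V] (H : SimpleGraph V) :
    ∃ M, IsInducedMatching H M ∧ M.card = mim H :=
  Nat.sSup_mem (by exact ⟨0, ∅, isInducedMatching_empty H, rfl⟩) (mim_bddAbove H)

lemma IsInducedMatching.map {W : Type*} {H' : SimpleGraph W} (f : H' ↪g H)
    {M : Finset (Sym2 W)} (hM : IsInducedMatching H' M) :
    IsInducedMatching H (M.map f.toEmbedding.sym2Map) := by
  constructor
  · intro e he
    obtain ⟨e, he₀, rfl⟩ := Finset.mem_map.1 he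
    induction e using Sym2.ind with
    | _ x y => simpa using hM.1 he₀
  · intro e he e' he' hne x hx y hy
    obtain ⟨e, he₀, rfl⟩ := Finset.mem_map.1 he
    obtain ⟨e', he₀', rfl⟩ := Finset.mem_map.1 he'
    obtain ⟨x, hx₀, rfl⟩ := Sym2.mem_map.1 hx
    obtain ⟨y, hy₀, rfl⟩ := Sym2.mem_map.1 hy
    obtain ⟨hxy, hadj⟩ := hM.2 e he₀ e' he₀' (by rintro rfl; exact hne rfl) x hx₀ y hy₀
    exact ⟨f.injective.ne hxy, by simpa using hadj⟩

lemma closedNbhd_mono {G : SimpleGraph V} (h : H ≤ G) (s : Set V) :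
    closedNbhd H s ⊆ closedNbhd G s :=
  Set.union_subset_union_right s fun _ ⟨u, hu, huv⟩ => ⟨u, hu, h huv⟩

lemma ne_and_not_adj_of_notMem_closedNbhd {B : Set V} {x y : V} (hx : x ∉ closedNbhd H B)
    (hy : y ∈ B) : x ≠ y ∧ ¬ H.Adj x y :=
  ⟨by rintro rfl; exact hx (Or.inl hy), fun h => hx (Or.inr ⟨y, hy, h.symm⟩)⟩

lemma IsInducedMatching.insert {B : Set V} (hM : IsInducedMatching H M)
    (hMB : ∀ e ∈ M, ∀ x ∈ e, x ∈ B) {u v : V} (huv : H.Adj u v)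
    (hu : u ∉ closedNbhd H B) (hv : v ∉ closedNbhd H B) :
    IsInducedMatching H (insert s(u, v) M) := by
  have far : ∀ x ∈ s(u, v), ∀ f ∈ M, ∀ y ∈ f, x ≠ y ∧ ¬ H.Adj x y := by
    rintro x hx f hf y hy
    rcases Sym2.mem_iff.1 hx with rfl | rfl
    exacts [ne_and_not_adj_of_notMem_closedNbhd hu (hMB f hf y hy),
      ne_and_not_adj_of_notMem_closedNbhd hv (hMB f hf y hy)]
  constructor
  · intro e he
    rcases Finset.mem_insert.1 he with rfl | he
    exacts [huv, hM.1 he]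
  · intro e he f hf hef x hx y hy
    rcases Finset.mem_insert.1 he with rfl | he <;> rcases Finset.mem_insert.1 hf with rfl | hf
    · exact absurd rfl hef
    · exact far x hx f hf y hy
    · obtain ⟨hne, hadj⟩ := far y hy e he x hx
      exact ⟨hne.symm, fun h => hadj h.symm⟩
    · exact hM.2 e he f hf hef x hx y hy

lemma IsInducedMatching.card_lt_mim [Fintype V] {B : Set V} (hM : IsInducedMatching H M)
    (hMB : ∀ e ∈ M, ∀ x ∈ e, x ∈ B) {u v : V} (huv : H.Adj u v)
    (hu : u ∉ closedNbhd H B) (hv : v ∉ closedNbhd H B) : M.card < mim H := by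
  have hnew : s(u, v) ∉ M := fun h => hu (Or.inl (hMB _ h u (Sym2.mem_mk_left u v)))
  have := (hM.insert hMB huv hu hv).card_le_mim
  rwa [Finset.card_insert_of_notMem hnew] at this

end InducedMatching

lemma exists_adj_lt_le_of_reachable {W : Type*} {H : SimpleGraph W} (f : W → ℕ) {i : ℕ}
    {x y : W} (hxy : H.Reachable x y) (hx : f x < i) (hy : i ≤ f y) :
    ∃ u v, H.Adj u v ∧ f u < i ∧ i ≤ f v := by
  obtain ⟨w⟩ := hxy
  obtain ⟨d, -, hd, hd'⟩ := w.exists_boundary_dart {z | f z < i} hx (by simpa using hy)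
  exact ⟨d.fst, d.snd, d.adj, hd, by simpa using hd'⟩

lemma exists_equiv_fin_lt_iff {α β : Type*} [Fintype α] [LinearOrder β] {f : α → β}
    (hf : Function.Injective f) :
    ∃ τ : α ≃ Fin (Fintype.card α), ∀ x y, τ x < τ y ↔ f x < f y :=
  letI := LinearOrder.lift' f hf
  ⟨(Fintype.orderIsoFinOfCardEq α rfl).symm.toEquiv,
    fun _ _ => (Fintype.orderIsoFinOfCardEq α rfl).symm.lt_iff_lt⟩

lemma exists_lt_iff_of_lt_iff {α : Type*} {n m : ℕ} (τ : α ≃ Fin n) (f : α → Fin m)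
    (hτ : ∀ x y, τ x < τ y ↔ f x < f y) (t : ℕ) :
    ∃ i : ℕ, ∀ x, (τ x : ℕ) < t ↔ (f x : ℕ) < i := by
  by_cases ht : t < n
  · refine ⟨f (τ.symm ⟨t, ht⟩), fun x => ?_⟩
    have := hτ x (τ.symm ⟨t, ht⟩)
    rwa [Equiv.apply_symm_apply, Fin.lt_def, Fin.lt_def] at this
  · exact ⟨m, fun x => by simp only [(f x).is_lt, iff_true]; omega⟩

section Layout

variable {V : Type*} [Fintype V] {G : SimpleGraph V}

lemma cutGraph_le (G : SimpleGraph V) (σ : V ≃ Fin (Fintype.card V)) (i : ℕ) :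
    cutGraph G σ i ≤ G :=
  fun _ _ h => h.1

lemma mim_cutGraph_le_mw (G : SimpleGraph V) (σ : V ≃ Fin (Fintype.card V)) (i : ℕ) :
    mim (cutGraph G σ i) ≤ mw G σ := by
  by_cases hi : i ∈ Finset.Ico 1 (Fintype.card V)
  · exact Finset.le_sup (f := fun j => mim (cutGraph G σ j)) hi
  · obtain ⟨M, hM, hcard⟩ := exists_isInducedMatching_card_eq_mim (cutGraph G σ i)
    suffices M = ∅ by simp [← hcard, this]
    refine Finset.eq_empty_of_forall_notMem fun e he => ?_
    induction e using Sym2.ind with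
    | _ u v =>
      have := (σ u).is_lt
      have := (σ v).is_lt
      rcases (hM.1 he).2 with h | h <;> simp only [Finset.mem_Ico] at hi <;> omega

lemma le_lmw_of_forall_le_mw {k : ℕ} (h : ∀ σ, k ≤ mw G σ) : k ≤ lmw G :=
  le_csInf ⟨_, Fintype.equivFin V, rfl⟩ (by rintro m ⟨σ, rfl⟩; exact h σ)

lemma lmw_le_mw (G : SimpleGraph V) (σ : V ≃ Fin (Fintype.card V)) : lmw G ≤ mw G σ :=
  Nat.sInf_le ⟨σ, rfl⟩

lemma cutGraph_induce {s : Set V} (σ : V ≃ Fin (Fintype.card V)) (τ : s ≃ Fin (Fintype.card s))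
    {t i : ℕ} (h : ∀ x, (τ x : ℕ) < t ↔ (σ x : ℕ) < i) :
    cutGraph (G.induce s) τ t = (cutGraph G σ i).induce s := by
  ext x y
  simp only [cutGraph, SimpleGraph.comap_adj, ← not_lt, h]
  rfl

end Layout

section Reachability

variable {V : Type*} {G : SimpleGraph V}

lemma notMem_closedNbhd_of_two_le_edist {B : Set V} {u : V} (h : ∀ v ∈ B, 2 ≤ G.edist u v) :
    u ∉ closedNbhd G B := by
  rintro (hu | ⟨v, hv, hvu⟩)
  · simpa using h u hu
  · have := h v hv
    rw [SimpleGraph.edist_comm, SimpleGraph.edist_eq_one_iff_adj.2 hvu] at this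
    norm_num at this

lemma reachable_induce_of_connected {A S : Set V} (hA : (G.induce A).Connected) (hAS : A ⊆ S)
    {a a' : V} (ha : a ∈ A) (ha' : a' ∈ A) :
    (G.induce S).Reachable ⟨a, hAS ha⟩ ⟨a', hAS ha'⟩ :=
  (hA.preconnected ⟨a, ha⟩ ⟨a', ha'⟩).map (G.induceHomOfLE hAS).toHom

end Reachability

section ThreeParts

variable {V : Type*} [Fintype V] {G : SimpleGraph V}

def HasCutMatching (G : SimpleGraph V) (σ : V ≃ Fin (Fintype.card V)) (i : ℕ) (s : Set V)
    (k : ℕ) : Prop :=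
  ∃ M : Finset (Sym2 V), IsInducedMatching (cutGraph G σ i) M ∧ k ≤ M.card ∧
    ∀ e ∈ M, ∀ x ∈ e, x ∈ s

lemma HasCutMatching.exists_lt_le {σ : V ≃ Fin (Fintype.card V)} {i k : ℕ} {s : Set V}
    (h : HasCutMatching G σ i s k) (hk : 0 < k) :
    ∃ a ∈ s, ∃ b ∈ s, (σ a : ℕ) < i ∧ i ≤ (σ b : ℕ) := by
  obtain ⟨M, hM, hkM, hMs⟩ := h
  obtain ⟨e, he⟩ := Finset.card_pos.1 (hk.trans_le hkM)
  induction e using Sym2.ind with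
  | _ u v =>
    have hu := hMs _ he u (Sym2.mem_mk_left u v)
    have hv := hMs _ he v (Sym2.mem_mk_right u v)
    rcases (hM.1 he).2 with h | h
    exacts [⟨u, hu, v, hv, h⟩, ⟨v, hv, u, hu, h⟩]

lemma exists_hasCutMatching_of_le_lmw (σ : V ≃ Fin (Fintype.card V)) {s : Set V} {k : ℕ}
    (hk : k ≤ lmw (G.induce s)) : ∃ i, HasCutMatching G σ i s k := by
  obtain ⟨τ, hτ⟩ := exists_equiv_fin_lt_iff (f := fun x : s => σ x)
    (σ.injective.comp Subtype.val_injective)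
  obtain ⟨t, ht⟩ : ∃ t, mw (G.induce s) τ ≤ mim (cutGraph (G.induce s) τ t) := by
    rcases (Finset.Ico 1 (Fintype.card s)).eq_empty_or_nonempty with h | h
    · exact ⟨0, by rw [mw, h, Finset.sup_empty]; exact bot_le⟩
    · obtain ⟨t, -, ht⟩ := Finset.exists_mem_eq_sup _ h fun j => mim (cutGraph (G.induce s) τ j)
      exact ⟨t, ht.le⟩
  obtain ⟨i, hi⟩ := exists_lt_iff_of_lt_iff τ _ hτ t
  obtain ⟨M, hM, hcard⟩ := exists_isInducedMatching_card_eq_mim (cutGraph (G.induce s) τ t)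
  rw [cutGraph_induce σ τ hi] at hM
  refine ⟨i, _, hM.map (SimpleGraph.Embedding.induce s), ?_, ?_⟩
  · rw [Finset.card_map]
    linarith [lmw_le_mw (G.induce s) τ]
  · intro e he x hx
    obtain ⟨e, -, rfl⟩ := Finset.mem_map.1 he
    obtain ⟨x, -, rfl⟩ := Sym2.mem_map.1 hx
    exact x.2

lemma card_lt_mim_cutGraph (σ : V ≃ Fin (Fintype.card V)) {B : Set V} {i : ℕ}
    {M : Finset (Sym2 V)} (hM : IsInducedMatching (cutGraph G σ i) M)
    (hMB : ∀ e ∈ M, ∀ x ∈ e, x ∈ B) {x y : ↥(closedNbhd G B)ᶜ}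
    (hxy : (G.induce (closedNbhd G B)ᶜ).Reachable x y) (hx : (σ x : ℕ) < i)
    (hy : i ≤ (σ y : ℕ)) : M.card < mim (cutGraph G σ i) := by
  obtain ⟨u, v, huv, hu, hv⟩ :=
    exists_adj_lt_le_of_reachable (fun z : ↥(closedNbhd G B)ᶜ => (σ z : ℕ)) hxy hx hy
  have hcut := cutGraph_le G σ i
  exact hM.card_lt_mim hMB (u := u) (v := v) ⟨huv, Or.inl ⟨hu, hv⟩⟩
    (fun h => u.2 (closedNbhd_mono hcut B h)) (fun h => v.2 (closedNbhd_mono hcut B h))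

lemma one_le_mw_of_reachable (σ : V ≃ Fin (Fintype.card V)) {a b : V} (hab : G.Reachable a b)
    (hne : a ≠ b) : 1 ≤ mw G σ := by
  wlog h : (σ a : ℕ) < σ b generalizing a b
  · exact this hab.symm hne.symm (by have := Fin.val_injective.ne (σ.injective.ne hne); omega)
  obtain ⟨u, v, huv, hu, hv⟩ := exists_adj_lt_le_of_reachable (fun z => (σ z : ℕ)) hab h le_rfl
  have := (isInducedMatching_empty (cutGraph G σ (σ b))).card_lt_mim (B := ∅) (by simp)
    (u := u) (v := v) ⟨huv, Or.inl ⟨hu, hv⟩⟩ (by simp [closedNbhd]) (by simp [closedNbhd])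
  exact this.trans_le (mim_cutGraph_le_mw G σ _)

lemma succ_le_mw_of_median (σ : V ≃ Fin (Fintype.card V)) {A B C : Set V} {iA iB iC k : ℕ}
    (hk : 0 < k) (hA : (G.induce A).Connected) (hC : (G.induce C).Connected)
    (hAB : ∀ u ∈ A, ∀ v ∈ B, 2 ≤ G.edist u v) (hCB : ∀ u ∈ C, ∀ v ∈ B, 2 ≤ G.edist u v)
    {a c : V} (ha : a ∈ A) (hc : c ∈ C) (w : G.Walk a c)
    (hw : ∀ x ∈ w.support, x ∉ closedNbhd G B)
    (hMA : HasCutMatching G σ iA A k) (hMB : HasCutMatching G σ iB B k)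
    (hMC : HasCutMatching G σ iC C k) (hi : iA ≤ iB ∧ iB ≤ iC ∨ iC ≤ iB ∧ iB ≤ iA) :
    k + 1 ≤ mw G σ := by
  have hAS : A ⊆ (closedNbhd G B)ᶜ := fun u hu => notMem_closedNbhd_of_two_le_edist (hAB u hu)
  have hCS : C ⊆ (closedNbhd G B)ᶜ := fun u hu => notMem_closedNbhd_of_two_le_edist (hCB u hu)
  have reach : ∀ x (hx : x ∈ A) y (hy : y ∈ C),
      (G.induce (closedNbhd G B)ᶜ).Reachable ⟨x, hAS hx⟩ ⟨y, hCS hy⟩ := fun x hx y hy =>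
    ((reachable_induce_of_connected hA hAS hx ha).trans ⟨w.induce _ hw⟩).trans
      (reachable_induce_of_connected hC hCS hc hy)
  obtain ⟨M, hM, hkM, hMB⟩ := hMB
  suffices M.card < mim (cutGraph G σ iB) by linarith [mim_cutGraph_le_mw G σ iB]
  obtain ⟨x, hx, x', hx', hxi, hx'i⟩ := hMA.exists_lt_le hk
  obtain ⟨y, hy, y', hy', hyi, hy'i⟩ := hMC.exists_lt_le hk
  rcases hi with ⟨h₁, h₂⟩ | ⟨h₁, h₂⟩
  · exact card_lt_mim_cutGraph σ hM hMB (reach x hx y' hy') (by simp; omega) (by simp; omega)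
  · exact card_lt_mim_cutGraph σ hM hMB (reach x' hx' y hy).symm (by simp; omega) (by simp; omega)

/-- If `C₁, C₂, C₃` are connected induced subgraphs of `G` with pairwise distance at least
two, `k` is the minimum of their linear MIM-widths, and each pair of them is joined by a
path avoiding the closed neighborhood of the third, then `lmw G ≥ k + 1`. -/
theorem three_parts_lemma {V : Type*} [Fintype V] (G : SimpleGraph V)
    (C₁ C₂ C₃ : Set V) (k : ℕ)
    (hc₁ : (G.induce C₁).Connected) (hc₂ : (G.induce C₂).Connected)
    (hc₃ : (G.induce C₃).Connected)
    (hd₁₂ : ∀ u ∈ C₁, ∀ v ∈ C₂, 2 ≤ G.edist u v)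
    (hd₁₃ : ∀ u ∈ C₁, ∀ v ∈ C₃, 2 ≤ G.edist u v)
    (hd₂₃ : ∀ u ∈ C₂, ∀ v ∈ C₃, 2 ≤ G.edist u v)
    (hk : k = min (lmw (G.induce C₁)) (min (lmw (G.induce C₂)) (lmw (G.induce C₃))))
    (hp₁₂ : ∃ a ∈ C₁, ∃ b ∈ C₂, ∃ w : G.Walk a b, w.IsPath ∧
      ∀ x ∈ w.support, x ∉ closedNbhd G C₃)
    (hp₁₃ : ∃ a ∈ C₁, ∃ b ∈ C₃, ∃ w : G.Walk a b, w.IsPath ∧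
      ∀ x ∈ w.support, x ∉ closedNbhd G C₂)
    (hp₂₃ : ∃ a ∈ C₂, ∃ b ∈ C₃, ∃ w : G.Walk a b, w.IsPath ∧
      ∀ x ∈ w.support, x ∉ closedNbhd G C₁) :
    k + 1 ≤ lmw G := by
  have hd₂₁ : ∀ u ∈ C₂, ∀ v ∈ C₁, 2 ≤ G.edist u v := fun u hu v hv =>
    G.edist_comm ▸ hd₁₂ v hv u hu
  have hd₃₁ : ∀ u ∈ C₃, ∀ v ∈ C₁, 2 ≤ G.edist u v := fun u hu v hv =>
    G.edist_comm ▸ hd₁₃ v hv u hu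
  have hd₃₂ : ∀ u ∈ C₃, ∀ v ∈ C₂, 2 ≤ G.edist u v := fun u hu v hv =>
    G.edist_comm ▸ hd₂₃ v hv u hu
  obtain ⟨a₁₂, ha₁₂, b₁₂, hb₁₂, w₁₂, -, hw₁₂⟩ := hp₁₂
  obtain ⟨a₁₃, ha₁₃, b₁₃, hb₁₃, w₁₃, -, hw₁₃⟩ := hp₁₃
  obtain ⟨a₂₃, ha₂₃, b₂₃, hb₂₃, w₂₃, -, hw₂₃⟩ := hp₂₃
  refine le_lmw_of_forall_le_mw fun σ => ?_
  rcases Nat.eq_zero_or_pos k with rfl | hk0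
  · refine one_le_mw_of_reachable σ w₁₂.reachable fun h => ?_
    exact notMem_closedNbhd_of_two_le_edist (hd₁₂ a₁₂ ha₁₂) (Or.inl (h ▸ hb₁₂))
  obtain ⟨i₁, h₁⟩ := exists_hasCutMatching_of_le_lmw σ
    (show k ≤ lmw (G.induce C₁) by omega)
  obtain ⟨i₂, h₂⟩ := exists_hasCutMatching_of_le_lmw σ
    (show k ≤ lmw (G.induce C₂) by omega)
  obtain ⟨i₃, h₃⟩ := exists_hasCutMatching_of_le_lmw σ
    (show k ≤ lmw (G.induce C₃) by omega)
  rcases (by omega : (i₁ ≤ i₂ ∧ i₂ ≤ i₃ ∨ i₃ ≤ i₂ ∧ i₂ ≤ i₁) ∨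
      (i₂ ≤ i₁ ∧ i₁ ≤ i₃ ∨ i₃ ≤ i₁ ∧ i₁ ≤ i₂) ∨ (i₁ ≤ i₃ ∧ i₃ ≤ i₂ ∨ i₂ ≤ i₃ ∧ i₃ ≤ i₁))
    with h | h | h
  · exact succ_le_mw_of_median σ hk0 hc₁ hc₃ hd₁₂ hd₃₂ ha₁₃ hb₁₃ w₁₃ hw₁₃ h₁ h₂ h₃ h
  · exact succ_le_mw_of_median σ hk0 hc₂ hc₃ hd₂₁ hd₃₁ ha₂₃ hb₂₃ w₂₃ hw₂₃ h₂ h₁ h₃ h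
  · exact succ_le_mw_of_median σ hk0 hc₁ hc₂ hd₁₃ hd₂₃ ha₁₂ hb₁₂ w₁₂ hw₁₂ h₁ h₃ h₂ h

end ThreeParts

end LMW
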